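/- In a weakly tree-child leaf-labeled network, the root μ-vectors of distinct root components are incomparable in the coordinatewise partial order. -/

import Mathlib

open Relation

/-- A semidirected graph: a set of undirected edges and a set of directed edges. -/
structure SDG (V : Type) where
  undir : Finset (Sym2 V)
  dir : Finset (V × V)

namespace SDG

variable {V : Type} [DecidableEq V]

/-- one step along a directed edge -/
def dstep (N : SDG V) (u v : V) : Prop := (u, v) ∈ N.dir

/-- one step along an undirected edge -/
def ustep (N : SDG V) (u v : V) : Prop := s(u, v) ∈ N.undir

/-- one step of a semidirected path -/
def sstep (N : SDG V) (u v : V) : Prop := N.dstep u v ∨ N.ustep u v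

/-- directed reachability (existence of a directed path) -/
def dreach (N : SDG V) : V → V → Prop := ReflTransGen N.dstep

/-- reachability using undirected edges only -/
def ureach (N : SDG V) : V → V → Prop := ReflTransGen N.ustep

/-- semidirected reachability (existence of a semidirected path) -/
def sreach (N : SDG V) : V → V → Prop := ReflTransGen N.sstep

/-- `M` is obtained from `N` by directing some of the undirected edges of `N`
(each such edge receiving exactly one direction). -/
def Directs (N M : SDG V) : Prop :=
  M.undir ⊆ N.undir ∧ N.dir ⊆ M.dir ∧
    (∀ e ∈ M.dir, e ∉ N.dir → s(e.1, e.2) ∈ N.undir ∧ s(e.1, e.2) ∉ M.undir) ∧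
    (∀ p ∈ N.undir, p ∉ M.undir →
      ∃! e : V × V, e ∈ M.dir ∧ e ∉ N.dir ∧ s(e.1, e.2) = p)

/-- a semidirected graph is directed when it has no undirected edges -/
def IsDirected (N : SDG V) : Prop := N.undir = ∅

/-- existence of a directed cycle -/
def HasDirCycle (N : SDG V) : Prop := ∃ e ∈ N.dir, N.dreach e.2 e.1

/-- `N` is acyclic if no compatible directed graph (obtained by directing all
undirected edges) has a directed cycle. -/
def Acyclic (N : SDG V) : Prop :=
  ∀ G : SDG V, Directs N G → G.IsDirected → ¬ G.HasDirCycle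

/-- in-degree: number of incoming directed edges -/
def ideg (N : SDG V) (v : V) : ℕ := (N.dir.filter fun e => e.2 = v).card

/-- out-degree: number of outgoing directed edges -/
def odeg (N : SDG V) (v : V) : ℕ := (N.dir.filter fun e => e.1 = v).card

/-- number of incident undirected edges -/
def udeg (N : SDG V) (v : V) : ℕ := (N.undir.filter fun p => v ∈ p).card

/-- total degree -/
def deg (N : SDG V) (v : V) : ℕ := N.ideg v + N.odeg v + N.udeg v

/-- hybrid edges: directed edges whose child is a hybrid node (in-degree ≥ 2) -/
def hybridEdges (N : SDG V) : Finset (V × V) := N.dir.filter fun e => 2 ≤ N.ideg e.2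

/-- no self-loops, and no undirected edge parallel to a directed edge -/
def Proper (N : SDG V) : Prop :=
  (∀ p ∈ N.undir, ¬ p.IsDiag) ∧ (∀ e ∈ N.dir, e.1 ≠ e.2) ∧
    ∀ e ∈ N.dir, s(e.1, e.2) ∉ N.undir

/-- `M` is phylogenetically compatible with `N`: `M` is an SDAG obtained from
`N` by directing some undirected edges, keeping the same hybrid edges. -/
def PhyloCompat (M N : SDG V) : Prop :=
  Directs N M ∧ M.Acyclic ∧ M.hybridEdges = N.hybridEdges

/-- a rooted partner of `N`: a DAG phylogenetically compatible with `N` -/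
def RootedPartner (G N : SDG V) : Prop := PhyloCompat G N ∧ G.IsDirected

/-- a network: an SDAG admitting a rooted partner -/
def IsNetwork (N : SDG V) : Prop := N.Acyclic ∧ ∃ G : SDG V, RootedPartner G N

/-- mutual semidirected reachability (same undirected component) -/
def sim (N : SDG V) (u v : V) : Prop := N.sreach u v ∧ N.sreach v u

/-- `v` lies in a root component: its undirected component is maximal for the
semidirected-path preorder -/
def InRootComp (N : SDG V) (v : V) : Prop := ∀ u, N.sreach u v → N.sreach v u

/-- the undirected simple graph induced by the undirected edges -/
def undirGraph (N : SDG V) : SimpleGraph V :=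
  SimpleGraph.fromEdgeSet (N.undir : Set (Sym2 V))

/-- leaf in some rooted partner -/
def IsUnrootedLeaf (N : SDG V) (v : V) : Prop :=
  ∃ G : SDG V, RootedPartner G N ∧ G.odeg v = 0

/-- leaf in every rooted partner -/
def IsRootedLeaf (N : SDG V) (v : V) : Prop :=
  ∀ G : SDG V, RootedPartner G N → G.odeg v = 0

/-- a leaf-labeled network: a network whose unrooted leaves are all rooted leaves
(so that its leaf set is stable across rooted partners and can be labeled) -/
def LNetwork (N : SDG V) : Prop :=
  IsNetwork N ∧ ∀ v, IsUnrootedLeaf N v → IsRootedLeaf N v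

/-- `l` is (the list of nodes of) a directed path from `u` to `v` in `G` -/
def IsDPathList (G : SDG V) (u v : V) (l : List V) : Prop :=
  l.head? = some u ∧ l.getLast? = some v ∧ l.Chain' G.dstep

/-- the number of directed paths from `u` to `v` -/
noncomputable def pathCount (G : SDG V) (u v : V) : ℕ :=
  Set.ncard {l : List V | IsDPathList G u v l}

/-- the set of directed paths starting at `v` -/
def startPaths (G : SDG V) (v : V) : Set (List V) :=
  {l : List V | l.head? = some v ∧ l.Chain' G.dstep}

/-- a root choice function: picks one node in each root component, constant on
root components, and the identity outside of root components -/
def RootChoice (N : SDG V) (ρ : V → V) : Prop :=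
  (∀ v, InRootComp N v → sim N v (ρ v) ∧ ∀ u, InRootComp N u → sim N u v → ρ u = ρ v) ∧
    ∀ v, ¬ InRootComp N v → ρ v = v

/-- `G` is the rooted partner of `N` whose set of roots (in-degree 0 nodes) is the
image of the root choice function `ρ` -/
def PartnerFor (N : SDG V) (ρ : V → V) (G : SDG V) : Prop :=
  RootedPartner G N ∧ {v | G.ideg v = 0} = ρ '' {v | InRootComp N v}

-- the directional μ-vector of `(u, v)`: path counts from `v` to each node in any
-- rooted partner directing the edge `uv` as `(u, v)`
open Classical in
noncomputable def muD (N : SDG V) (u v : V) : V → ℕ :=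
  if h : ∃ G : SDG V, RootedPartner G N ∧ (u, v) ∈ G.dir then
    fun x => pathCount h.choose v x
  else fun _ => 0

-- the root μ-vector of the root component of `t`
open Classical in
noncomputable def muR (N : SDG V) (t : V) : V → ℕ :=
  if h : ∃ p : (V → V) × SDG V, RootChoice N p.1 ∧ PartnerFor N p.1 p.2 then
    fun x => pathCount h.choose.2 (h.choose.1 t) x
  else fun _ => 0

/-- a DAG is tree-child if every non-leaf node has a tree-node child -/
def TreeChildDAG (G : SDG V) : Prop :=
  ∀ v, 0 < G.odeg v → ∃ w, (v, w) ∈ G.dir ∧ G.ideg w ≤ 1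

/-- all rooted partners are tree-child -/
def StronglyTreeChild (N : SDG V) : Prop :=
  ∀ G : SDG V, RootedPartner G N → TreeChildDAG G

/-- some rooted partner is tree-child -/
def WeaklyTreeChild (N : SDG V) : Prop :=
  ∃ G : SDG V, RootedPartner G N ∧ TreeChildDAG G

/-- coordinatewise comparison of μ-vectors over the leaves of `N` -/
def muLE (N : SDG V) (m m' : V → ℕ) : Prop :=
  ∀ x, IsUnrootedLeaf N x → m x ≤ m' x

/-- incomparability of μ-vectors (over the leaves of `N`) -/
def muIncomp (N : SDG V) (m m' : V → ℕ) : Prop :=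
  ¬ muLE N m m' ∧ ¬ muLE N m' m

/-- a network is complete when every undirected edge lies in a root component
(equivalently, it equals its completion) -/
def Complete (N : SDG V) : Prop := ∀ p ∈ N.undir, ∀ v ∈ p, InRootComp N v

/-- reachability by a tree path (directed path whose edges are all tree edges) -/
def treeReach (G : SDG V) : V → V → Prop :=
  ReflTransGen fun a b => (a, b) ∈ G.dir ∧ G.ideg b ≤ 1

/-- `v` has a tree descendant leaf -/
def HasTreeDescLeaf (G : SDG V) (v : V) : Prop := ∃ x, G.odeg x = 0 ∧ treeReach G v x

/-- `l` is an elementary path from `u` to `v`: a directed path whose first node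
has out-degree 1 and whose intermediate nodes have in- and out-degree 1 -/
def IsElemPathList (G : SDG V) (u v : V) (l : List V) : Prop :=
  l.head? = some u ∧ l.getLast? = some v ∧ l.Chain' G.dstep ∧ 2 ≤ l.length ∧
    G.odeg u = 1 ∧ ∀ w ∈ (l.drop 1).dropLast, G.ideg w = 1 ∧ G.odeg w = 1

/-- an elementary node: a tree node with out-degree = total degree = 1, or
out-degree < total degree = 2 -/
def IsElemNode (G : SDG V) (v : V) : Prop :=
  G.ideg v ≤ 1 ∧ ((G.odeg v = 1 ∧ G.deg v = 1) ∨ (G.odeg v < G.deg v ∧ G.deg v = 2))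

/-- the setoid identifying nodes connected by undirected edges -/
def usetoid (N : SDG V) : Setoid V :=
  ⟨Relation.EqvGen N.ustep, Relation.EqvGen.is_equivalence _⟩

/-- the edge relation of the contraction of `N`: the directed graph on the
quotient by undirected connectivity, with the directed edges of `N` -/
def crel (N : SDG V) (x y : Quotient N.usetoid) : Prop :=
  ∃ u v : V, (u, v) ∈ N.dir ∧ Quotient.mk N.usetoid u = x ∧ Quotient.mk N.usetoid v = y


section Proof14
set_option linter.unusedSectionVars false
set_option linter.unusedVariables false

variable {N M G M₁ M₂ : SDG V}

lemma directs_self (G : SDG V) : Directs G G :=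
  ⟨Finset.Subset.refl _, Finset.Subset.refl _, fun e he hne => absurd he hne,
   fun p hp hnp => absurd hp hnp⟩

lemma partner_noCycle (h : RootedPartner G N) : ¬ G.HasDirCycle :=
  h.1.2.1 G (directs_self G) h.2

lemma ideg_eq_zero_iff {v : V} : G.ideg v = 0 ↔ ∀ e ∈ G.dir, e.2 ≠ v := by
  unfold ideg
  rw [Finset.card_eq_zero, Finset.filter_eq_empty_iff]

lemma ideg_pos_of_mem {e : V × V} (he : e ∈ G.dir) {v : V} (hv : e.2 = v) : 0 < G.ideg v :=
  Finset.card_pos.mpr ⟨e, Finset.mem_filter.mpr ⟨he, hv⟩⟩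

lemma para (hP : N.Proper) {x y : V} (h : s(x, y) ∈ N.undir) : (x, y) ∉ N.dir :=
  fun hd => hP.2.2 (x, y) hd h

lemma orient (hpart : RootedPartner M N) {x y : V} (h : s(x, y) ∈ N.undir) :
    (x, y) ∈ M.dir ∨ (y, x) ∈ M.dir := by
  have h2 : s(x, y) ∉ M.undir := by rw [hpart.2]; exact Finset.notMem_empty _
  obtain ⟨e, ⟨he, _, hs⟩, _⟩ := hpart.1.1.2.2.2 _ h h2
  rcases Sym2.eq_iff.mp hs with ⟨h1, h2⟩ | ⟨h1, h2⟩
  · left; have : e = (x, y) := Prod.ext h1 h2; rwa [this] at he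
  · right; have : e = (y, x) := Prod.ext h1 h2; rwa [this] at he

lemma not_both (hP : N.Proper) (hpart : RootedPartner M N) {x y : V}
    (h : s(x, y) ∈ N.undir) : ¬ ((x, y) ∈ M.dir ∧ (y, x) ∈ M.dir) := by
  rintro ⟨h1, h2⟩
  have h2' : s(x, y) ∉ M.undir := by rw [hpart.2]; exact Finset.notMem_empty _
  obtain ⟨e, _, hu⟩ := hpart.1.1.2.2.2 _ h h2'
  have hxy : (x, y) ∉ N.dir := para hP h
  have hyx : (y, x) ∉ N.dir := para hP (by rwa [Sym2.eq_swap])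
  have e1 := hu (x, y) ⟨h1, hxy, rfl⟩
  have e2 := hu (y, x) ⟨h2, hyx, by rw [Sym2.eq_swap]⟩
  have : x = y := congrArg Prod.fst (e1.trans e2.symm)
  exact hP.1 _ h (Sym2.mk_isDiag_iff.mpr this)

lemma new_edge_head (hpart : RootedPartner M N) {e : V × V} (he : e ∈ M.dir)
    (hne : e ∉ N.dir) :
    M.ideg e.2 ≤ 1 ∧ N.ideg e.2 = 0 ∧ ∀ f ∈ M.dir, f.2 = e.2 → f = e := by
  have hdeg : M.ideg e.2 ≤ 1 := by
    by_contra hcon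
    push_neg at hcon
    have : e ∈ M.hybridEdges := Finset.mem_filter.mpr ⟨he, hcon⟩
    rw [hpart.1.2.2] at this
    exact hne (Finset.mem_filter.mp this).1
  have huniq : ∀ f ∈ M.dir, f.2 = e.2 → f = e := by
    intro f hf hfe
    exact Finset.card_le_one.mp hdeg f (Finset.mem_filter.mpr ⟨hf, hfe⟩)
      e (Finset.mem_filter.mpr ⟨he, rfl⟩)
  refine ⟨hdeg, ?_, huniq⟩
  rw [ideg_eq_zero_iff]
  intro f hf hfe
  exact hne (by rwa [huniq f (hpart.1.1.2.1 hf) hfe] at hf)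

end Proof14

section Proof14B
set_option linter.unusedSectionVars false
set_option linter.unusedVariables false

variable {r s : V → V → Prop}

lemma chain_dedup_aux :
    ∀ (n : ℕ) (l : List V) (a : V), l.length ≤ n → List.Chain r a l →
      ∃ l', List.Chain r a l' ∧ (a :: l').Nodup ∧
        (a :: l').getLast (List.cons_ne_nil _ _) = (a :: l).getLast (List.cons_ne_nil _ _) ∧
        l' ⊆ l := by
  intro n
  induction n with
  | zero =>
    intro l a hl hc
    have : l = [] := List.length_eq_zero_iff.mp (Nat.le_zero.mp hl)
    subst this
    exact ⟨[], List.Chain.nil, List.nodup_singleton a, rfl, fun x hx => hx⟩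
  | succ n ih =>
    intro l a hl hc
    by_cases ha : a ∈ l
    · obtain ⟨st, t, rfl⟩ := List.append_of_mem ha
      have h2 : List.Chain r a t := (List.isChain_cons_split.mp hc).2
      have hlen : t.length ≤ n := by simp at hl; omega
      obtain ⟨l', h1', h2', h3', h4'⟩ := ih t a hlen h2
      refine ⟨l', h1', h2', ?_, fun x hx => List.mem_append.mpr (Or.inr (List.mem_cons.mpr (Or.inr (h4' hx))))⟩
      rw [h3']
      exact (List.getLast_append_of_ne_nil (l := a :: st) _ (List.cons_ne_nil a t)).symm
    · cases l with
      | nil => exact ⟨[], hc, List.nodup_singleton a, rfl, fun x hx => hx⟩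
      | cons c cs =>
        have hac : r a c := (List.chain_cons.mp hc).1
        have hc' : List.Chain r c cs := (List.chain_cons.mp hc).2
        obtain ⟨l', h1', h2', h3', h4'⟩ := ih cs c (by simp at hl; omega) hc'
        refine ⟨c :: l', List.chain_cons.mpr ⟨hac, h1'⟩, ?_, ?_, ?_⟩
        · refine List.nodup_cons.mpr ⟨?_, h2'⟩
          intro hmem
          apply ha
          rcases List.mem_cons.mp hmem with h | h
          · exact h ▸ List.mem_cons_self
          · exact List.mem_cons.mpr (Or.inr (h4' h))
        · rw [List.getLast_cons_cons, h3', List.getLast_cons_cons]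
        · intro x hx
          rcases List.mem_cons.mp hx with h | h
          · exact h ▸ List.mem_cons_self
          · exact List.mem_cons_of_mem _ (h4' h)

lemma exists_nodup_chain {a b : V} (h : Relation.ReflTransGen r a b) :
    ∃ l, List.Chain r a l ∧ (a :: l).Nodup ∧
      (a :: l).getLast (List.cons_ne_nil _ _) = b := by
  obtain ⟨l, hl, hlast⟩ := List.exists_isChain_cons_of_relationReflTransGen h
  obtain ⟨l', h1, h2, h3, _⟩ := chain_dedup_aux l.length l a le_rfl hl
  exact ⟨l', h1, h2, h3.trans hlast⟩

lemma rtg_of_chain : ∀ (l : List V) (a : V), List.Chain r a l →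
    Relation.ReflTransGen r a ((a :: l).getLast (List.cons_ne_nil _ _)) := by
  intro l
  induction l with
  | nil => intro a _; exact Relation.ReflTransGen.refl
  | cons c cs ih =>
    intro a hc
    rw [List.getLast_cons_cons]
    exact Relation.ReflTransGen.head (List.chain_cons.mp hc).1 (ih c (List.chain_cons.mp hc).2)

lemma rtg_of_chain_mem : ∀ (l : List V) (a b : V), List.Chain r a l → b ∈ a :: l →
    Relation.ReflTransGen r a b := by
  intro l
  induction l with
  | nil =>
    intro a b _ hb
    rcases List.mem_singleton.mp hb with rfl
    exact Relation.ReflTransGen.refl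
  | cons c cs ih =>
    intro a b hc hb
    rcases List.mem_cons.mp hb with rfl | hb
    · exact Relation.ReflTransGen.refl
    · exact Relation.ReflTransGen.head (List.chain_cons.mp hc).1
        (ih c b (List.chain_cons.mp hc).2 hb)

lemma chain_mem_edge : ∀ (l : List V) (a b : V), List.Chain r a l → b ∈ l →
    ∃ c, r c b := by
  intro l
  induction l with
  | nil => intro a b _ hb; exact absurd hb (List.not_mem_nil)
  | cons c cs ih =>
    intro a b hc hb
    rcases List.mem_cons.mp hb with rfl | hb
    · exact ⟨a, (List.chain_cons.mp hc).1⟩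
    · exact ih c b (List.chain_cons.mp hc).2 hb

lemma snoc2 : ∀ (l : List V) (a : V), l ≠ [] →
    ∃ l'' p, a :: l = l'' ++ [p, (a :: l).getLast (List.cons_ne_nil _ _)] := by
  intro l
  induction l with
  | nil => tauto
  | cons c cs ih =>
    intro a _
    cases cs with
    | nil => exact ⟨[], a, by simp⟩
    | cons e es =>
      obtain ⟨l'', p, hp⟩ := ih c (by simp)
      refine ⟨a :: l'', p, ?_⟩
      rw [List.getLast_cons_cons]
      rw [List.cons_append]
      exact congrArg (a :: ·) hp

lemma chain_pair_of_append {l'' l : List V} {p q a : V}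
    (h : List.Chain r a l) (he : a :: l = l'' ++ [p, q]) : r p q := by
  have h' : List.Chain' r (a :: l) := h
  rw [he] at h'
  have := (List.isChain_append.mp h').2.1
  exact List.isChain_pair.mp this

lemma chain_and : ∀ (l : List V) (a : V), List.Chain r a l → List.Chain s a l →
    List.Chain (fun x y => r x y ∧ s x y) a l := by
  intro l
  induction l with
  | nil => intro a _ _; exact List.Chain.nil
  | cons c cs ih =>
    intro a h1 h2
    exact List.chain_cons.mpr ⟨⟨(List.chain_cons.mp h1).1, (List.chain_cons.mp h2).1⟩,
      ih c (List.chain_cons.mp h1).2 (List.chain_cons.mp h2).2⟩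

end Proof14B

section Proof14C
set_option linter.unusedSectionVars false
set_option linter.unusedVariables false

variable {N M M₁ M₂ : SDG V}

lemma ustep_symm {a b : V} (h : N.ustep a b) : N.ustep b a := by
  unfold ustep at *; rwa [Sym2.eq_swap]

lemma ureach_symm {a b : V} (h : N.ureach a b) : N.ureach b a :=
  Relation.ReflTransGen.mono (fun _ _ h => ustep_symm h) _ _ (Relation.ReflTransGen.swap _ _ h)

lemma sreach_of_ureach {a b : V} (h : N.ureach a b) : N.sreach a b :=
  Relation.ReflTransGen.mono (fun _ _ h => Or.inr h) _ _ h

lemma sim_of_ureach {a b : V} (h : N.ureach a b) : sim N a b :=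
  ⟨sreach_of_ureach h, sreach_of_ureach (ureach_symm h)⟩

lemma inRootComp_of_sim {u v : V} (hsim : sim N u v) (hu : InRootComp N u) :
    InRootComp N v := by
  intro w hw
  have h2 := hu w (hw.trans hsim.2)
  exact hsim.2.trans h2

lemma FW (hP : N.Proper) (hpart : RootedPartner M N) :
    ∀ (l : List V) (a : V), List.Chain N.sstep a l → (a :: l).Nodup →
      (∀ y, (y, a) ∈ M.dir → ((y, a) ∈ N.dir ∨ y ∉ l)) → List.Chain M.dstep a l := by
  intro l
  induction l with
  | nil => intro a _ _ _; exact List.Chain.nil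
  | cons c cs ih =>
    intro a hc hnd hbase
    obtain ⟨hstep, hrest⟩ := List.chain_cons.mp hc
    have hedge : (a, c) ∈ M.dir := by
      rcases hstep with hd | hu
      · exact hpart.1.1.2.1 hd
      · rcases orient hpart hu with h | h
        · exact h
        · exfalso
          rcases hbase c h with h' | h'
          · exact para hP (by rwa [Sym2.eq_swap]) h'
          · exact h' (List.mem_cons_self)
    have hnd' : (c :: cs).Nodup := (List.nodup_cons.mp hnd).2
    have hanotin : a ∉ c :: cs := (List.nodup_cons.mp hnd).1
    refine List.chain_cons.mpr ⟨hedge, ih c hrest hnd' ?_⟩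
    intro z hz
    by_cases hza : z = a
    · subst hza; right; intro hmem; exact hanotin (List.mem_cons_of_mem c hmem)
    · by_cases hzo : (z, c) ∈ N.dir
      · exact Or.inl hzo
      · exfalso
        have := (new_edge_head hpart hz hzo).2.2 (a, c) hedge rfl
        exact hza (congrArg Prod.fst this).symm

lemma ascent (hpart : RootedPartner M N) (v : V) :
    ∃ z, Relation.ReflTransGen (fun x y => (x, y) ∈ M.dir ∧ (x, y) ∉ N.dir) z v ∧
      (M.ideg z = 0 ∨ 0 < N.ideg z) := by
  classical
  have hnc := partner_noCycle hpart
  suffices h : ∀ (n : ℕ) (v : V), (M.dir.filter fun e => M.dreach e.2 v).card ≤ n →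
      ∃ z, Relation.ReflTransGen (fun x y => (x, y) ∈ M.dir ∧ (x, y) ∉ N.dir) z v ∧
        (M.ideg z = 0 ∨ 0 < N.ideg z) from h _ v le_rfl
  intro n
  induction n using Nat.strong_induction_on with
  | _ n ih =>
    intro v hcard
    by_cases h0 : M.ideg v = 0
    · exact ⟨v, .refl, Or.inl h0⟩
    · obtain ⟨e, he⟩ := Finset.card_pos.mp (Nat.pos_of_ne_zero h0)
      obtain ⟨heM, hev⟩ := Finset.mem_filter.mp he
      have heM' : (e.1, v) ∈ M.dir := by rw [← hev, Prod.mk.eta]; exact heM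
      by_cases hN : e ∈ N.dir
      · exact ⟨v, .refl, Or.inr (ideg_pos_of_mem hN hev)⟩
      · have hN' : (e.1, v) ∉ N.dir := by rw [← hev, Prod.mk.eta]; exact hN
        have hsub : (M.dir.filter fun f => M.dreach f.2 e.1) ⊆
            (M.dir.filter fun f => M.dreach f.2 v) := by
          intro f hf
          obtain ⟨hf1, hf2⟩ := Finset.mem_filter.mp hf
          exact Finset.mem_filter.mpr ⟨hf1, hf2.tail heM'⟩
        have hmem : e ∈ M.dir.filter fun f => M.dreach f.2 v :=
          Finset.mem_filter.mpr ⟨heM, by rw [hev]; exact Relation.ReflTransGen.refl⟩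
        have hnotmem : e ∉ M.dir.filter fun f => M.dreach f.2 e.1 := by
          intro hcon
          exact hnc ⟨e, heM, (Finset.mem_filter.mp hcon).2⟩
        have hlt : (M.dir.filter fun f => M.dreach f.2 e.1).card <
            (M.dir.filter fun f => M.dreach f.2 v).card :=
          Finset.card_lt_card ((Finset.ssubset_iff_of_subset hsub).mpr ⟨e, hmem, hnotmem⟩)
        obtain ⟨z, hz1, hz2⟩ := ih _ (lt_of_lt_of_le hlt hcard) e.1 le_rfl
        exact ⟨z, hz1.tail ⟨heM', hN'⟩, hz2⟩

lemma no_dir_into_sreach (hP : N.Proper) (hpart : RootedPartner M N) {u v : V}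
    (he : (u, v) ∈ N.dir) (hs : N.sreach v u) : False := by
  obtain ⟨l, hl, hnd, hlast⟩ := exists_nodup_chain hs
  have hbase : ∀ y, (y, v) ∈ M.dir → ((y, v) ∈ N.dir ∨ y ∉ l) := by
    intro y hy
    by_cases h : (y, v) ∈ N.dir
    · exact Or.inl h
    · exfalso
      have h0 : N.ideg v = 0 := (new_edge_head hpart hy h).2.1
      have : 0 < N.ideg v := ideg_pos_of_mem (G := N) he (show ((u,v)).2 = v from rfl)
      omega
  have hchain := FW hP hpart l v hl hnd hbase
  have hdr : M.dreach v u := by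
    have := rtg_of_chain l v hchain
    rwa [hlast] at this
  exact partner_noCycle hpart ⟨(u, v), hpart.1.1.2.1 he, hdr⟩

lemma rootcomp_ideg (hP : N.Proper) (hpart : RootedPartner M N) {v : V}
    (hv : InRootComp N v) : N.ideg v = 0 := by
  rw [ideg_eq_zero_iff]
  intro e he hev
  have he' : (e.1, v) ∈ N.dir := by rw [← hev, Prod.mk.eta]; exact he
  exact no_dir_into_sreach hP hpart he'
    (hv e.1 (Relation.ReflTransGen.single (Or.inl he')))

lemma root_in_rootcomp (hP : N.Proper) (hpart : RootedPartner M N) {v : V}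
    (hv : M.ideg v = 0) : InRootComp N v := by
  have hv' : ∀ e ∈ M.dir, e.2 ≠ v := ideg_eq_zero_iff.mp hv
  have key : ∀ c, N.ureach v c → N.ideg c = 0 := by
    intro c hc
    by_contra h0
    have hpos : 0 < N.ideg c := Nat.pos_of_ne_zero h0
    obtain ⟨l, hl, hnd, hlast⟩ := exists_nodup_chain (ureach_symm hc)
    have hbase : ∀ y, (y, c) ∈ M.dir → ((y, c) ∈ N.dir ∨ y ∉ l) := by
      intro y hy
      by_cases hyN : (y, c) ∈ N.dir
      · exact Or.inl hyN
      · exfalso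
        have h0' : N.ideg c = 0 := (new_edge_head hpart hy hyN).2.1
        omega
    have hchain := FW hP hpart l c (List.Chain.imp (fun _ _ h => Or.inr h) hl) hnd hbase
    cases l with
    | nil =>
      have hcv : c = v := hlast
      subst hcv
      obtain ⟨e, he⟩ := Finset.card_pos.mp hpos
      obtain ⟨he1, he2⟩ := Finset.mem_filter.mp he
      exact hv' e (hpart.1.1.2.1 he1) he2
    | cons d ds =>
      obtain ⟨l'', p, heq⟩ := snoc2 (d :: ds) c (List.cons_ne_nil _ _)
      have hpb := chain_pair_of_append hchain heq
      rw [hlast] at hpb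
      exact hv' (p, v) hpb rfl
  intro w hw
  have hcomp : ∀ u, N.sreach u v → N.ureach v u := by
    intro u hu
    induction hu using Relation.ReflTransGen.head_induction_on with
    | refl => exact .refl
    | @head a' c' hstep hrest ih =>
      rcases hstep with hd | hu'
      · exfalso
        have h0 := key c' ih
        have : 0 < N.ideg c' := ideg_pos_of_mem (G := N) hd (show ((a', c')).2 = c' from rfl)
        omega
      · exact ih.tail (ustep_symm hu')
  exact sreach_of_ureach (hcomp w hw)

lemma exists_root (hP : N.Proper) (hpart : RootedPartner M N) {v : V}
    (hv : InRootComp N v) : ∃ z, N.ureach v z ∧ M.ideg z = 0 := by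
  obtain ⟨z, hz, hprop⟩ := ascent hpart v
  have hzu : N.ureach z v := Relation.ReflTransGen.mono
    (fun x y h => (hpart.1.1.2.2.1 (x, y) h.1 h.2).1) _ _ hz
  rcases hprop with h | h
  · exact ⟨z, ureach_symm hzu, h⟩
  · exfalso
    have hzRC : InRootComp N z := inRootComp_of_sim (sim_of_ureach (ureach_symm hzu)) hv
    have := rootcomp_ideg hP hpart hzRC
    omega

lemma root_unique (hP : N.Proper) (hpart : RootedPartner M N) {z₁ z₂ : V}
    (h1 : M.ideg z₁ = 0) (h2 : M.ideg z₂ = 0) (h : N.ureach z₁ z₂) : z₁ = z₂ := by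
  obtain ⟨l, hl, hnd, hlast⟩ := exists_nodup_chain h
  cases l with
  | nil => exact hlast
  | cons c cs =>
    exfalso
    have hbase : ∀ y, (y, z₁) ∈ M.dir → ((y, z₁) ∈ N.dir ∨ y ∉ c :: cs) :=
      fun y hy => (ideg_eq_zero_iff.mp h1 (y, z₁) hy rfl).elim
    have hchain := FW hP hpart (c :: cs) z₁
      (List.Chain.imp (fun _ _ h => Or.inr h) hl) hnd hbase
    obtain ⟨l'', p, heq⟩ := snoc2 (c :: cs) z₁ (List.cons_ne_nil _ _)
    have hpb := chain_pair_of_append hchain heq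
    rw [hlast] at hpb
    exact ideg_eq_zero_iff.mp h2 (p, z₂) hpb rfl

lemma ureach_of_rootcomp_sreach (hP : N.Proper) (hpart : RootedPartner M N) :
    ∀ {x z : V}, N.sreach x z → InRootComp N x → N.sreach z x → N.ureach x z := by
  intro x z hxz
  induction hxz using Relation.ReflTransGen.head_induction_on with
  | refl => intro _ _; exact .refl
  | @head a c hstep hrest ih =>
    intro hx hza
    have hac : N.sreach a c := Relation.ReflTransGen.single hstep
    have hcz : N.sreach c z := hrest
    have hcRC : InRootComp N c := by
      intro w hwc
      have hwa : N.sreach w a := hwc.trans (hcz.trans hza)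
      exact (hcz.trans hza).trans (hx w hwa)
    rcases hstep with hd | hu
    · exact (no_dir_into_sreach hP hpart hd (hcz.trans hza)).elim
    · exact Relation.ReflTransGen.head hu (ih hcRC (hza.trans hac))

lemma orient_transfer (hP : N.Proper) (hp₁ : RootedPartner M₁ N) (hp₂ : RootedPartner M₂ N)
    {a b : V} (hab : (a, b) ∈ M₁.dir) (hnew : (a, b) ∉ N.dir) (hb : ¬ InRootComp N b) :
    (a, b) ∈ M₂.dir := by
  have hund : s(a, b) ∈ N.undir := (hp₁.1.1.2.2.1 (a, b) hab hnew).1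
  rcases orient hp₂ hund with h | h
  · exact h
  exfalso
  have hNb0 : N.ideg b = 0 := (new_edge_head hp₁ hab hnew).2.1
  have huniq1 : ∀ f ∈ M₁.dir, f.2 = b → f = (a, b) := (new_edge_head hp₁ hab hnew).2.2
  obtain ⟨z, hz, hprop⟩ := ascent hp₁ b
  have hzb : N.ureach z b := Relation.ReflTransGen.mono
    (fun x y h => (hp₁.1.1.2.2.1 (x, y) h.1 h.2).1) _ _ hz
  rcases hprop with hroot | hfed
  · exact hb (inRootComp_of_sim (sim_of_ureach hzb) (root_in_rootcomp hP hp₁ hroot))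
  · obtain ⟨l, hl, hnd, hlast⟩ := exists_nodup_chain hz
    have hne : l ≠ [] := by
      rintro rfl
      have hzb' : z = b := hlast
      rw [hzb'] at hfed
      omega
    obtain ⟨l'', p, heq⟩ := snoc2 l z hne
    have hpb := chain_pair_of_append hl heq
    rw [hlast] at hpb heq
    have hpa : p = a := congrArg Prod.fst (huniq1 (p, b) hpb.1 rfl)
    have hbase : ∀ y, (y, z) ∈ M₂.dir → ((y, z) ∈ N.dir ∨ y ∉ l) := by
      intro y hy
      by_cases hyN : (y, z) ∈ N.dir
      · exact Or.inl hyN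
      · exfalso
        have hz0 : N.ideg z = 0 := (new_edge_head hp₂ hy hyN).2.1
        omega
    have hchain2 := FW hP hp₂ l z (List.Chain.imp (fun x y h =>
        Or.inr (hp₁.1.1.2.2.1 (x, y) h.1 h.2).1) hl) hnd hbase
    have hab2 : (a, b) ∈ M₂.dir := by
      have := chain_pair_of_append hchain2 heq
      rwa [hpa] at this
    exact not_both hP hp₂ hund ⟨hab2, h⟩

end Proof14C

section Proof14D
set_option linter.unusedSectionVars false
set_option linter.unusedVariables false

variable {N M M₁ M₂ : SDG V}

lemma into_rootcomp (hP : N.Proper) (hpart : RootedPartner M N) {p q : V}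
    (h : (p, q) ∈ M.dir) (hq : InRootComp N q) : N.ustep p q := by
  by_cases hN : (p, q) ∈ N.dir
  · exfalso
    have h0 := rootcomp_ideg hP hpart hq
    have : 0 < N.ideg q := ideg_pos_of_mem hN (show ((p, q)).2 = q from rfl)
    omega
  · exact (hpart.1.1.2.2.1 (p, q) h hN).1

lemma tree_from_root (hP : N.Proper) (hpart : RootedPartner M N) {r c : V}
    (hr : M.ideg r = 0) (h : N.ureach r c) : treeReach M r c := by
  obtain ⟨l, hl, hnd, hlast⟩ := exists_nodup_chain h
  have hbase : ∀ y, (y, r) ∈ M.dir → ((y, r) ∈ N.dir ∨ y ∉ l) :=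
    fun y hy => (ideg_eq_zero_iff.mp hr (y, r) hy rfl).elim
  have hchain := FW hP hpart l r (List.Chain.imp (fun _ _ h => Or.inr h) hl) hnd hbase
  have hcomb := chain_and l r hchain hl
  have hrtg : Relation.ReflTransGen (fun x y => M.dstep x y ∧ N.ustep x y) r
      ((r :: l).getLast (List.cons_ne_nil _ _)) := rtg_of_chain l r hcomb
  rw [hlast] at hrtg
  refine Relation.ReflTransGen.mono ?_ _ _ hrtg
  intro x y hxy
  refine ⟨hxy.1, ?_⟩
  have hnew : (x, y) ∉ N.dir := para hP hxy.2
  exact (new_edge_head hpart hxy.1 hnew).1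

lemma ideg_transfer (hP : N.Proper) (hp₁ : RootedPartner M₁ N) (hp₂ : RootedPartner M₂ N)
    {y : V} (hy : ¬ InRootComp N y) : M₁.ideg y = M₂.ideg y := by
  suffices h : ∀ (A B : SDG V), RootedPartner A N → RootedPartner B N →
      (A.dir.filter fun e => e.2 = y) ⊆ (B.dir.filter fun e => e.2 = y) by
    exact le_antisymm (Finset.card_le_card (h M₁ M₂ hp₁ hp₂))
      (Finset.card_le_card (h M₂ M₁ hp₂ hp₁))
  intro A B hA hB e he
  obtain ⟨he1, he2⟩ := Finset.mem_filter.mp he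
  refine Finset.mem_filter.mpr ⟨?_, he2⟩
  by_cases hN : e ∈ N.dir
  · exact hB.1.1.2.1 hN
  · have : (e.1, e.2) ∈ B.dir := orient_transfer hP hA hB
      (by rw [Prod.mk.eta]; exact he1) (by rw [Prod.mk.eta]; exact hN) (by rw [he2]; exact hy)
    rwa [Prod.mk.eta] at this

lemma edge_transfer (hP : N.Proper) (hp₁ : RootedPartner M₁ N) (hp₂ : RootedPartner M₂ N)
    {x y : V} (h : (x, y) ∈ M₁.dir) (hy : ¬ InRootComp N y) : (x, y) ∈ M₂.dir := by
  by_cases hN : (x, y) ∈ N.dir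
  · exact hp₂.1.1.2.1 hN
  · exact orient_transfer hP hp₁ hp₂ h hN hy

lemma descent (hpart : RootedPartner M N) (hTC : TreeChildDAG M) (v : V) :
    ∃ x, M.odeg x = 0 ∧ treeReach M v x := by
  classical
  have hnc := partner_noCycle hpart
  suffices h : ∀ (n : ℕ) (v : V), (M.dir.filter fun e => M.dreach v e.1).card ≤ n →
      ∃ x, M.odeg x = 0 ∧ treeReach M v x from h _ v le_rfl
  intro n
  induction n using Nat.strong_induction_on with
  | _ n ih =>
    intro v hcard
    by_cases h0 : M.odeg v = 0
    · exact ⟨v, h0, .refl⟩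
    · have hodeg : 0 < M.odeg v := Nat.pos_of_ne_zero h0
      obtain ⟨w, hw, hwdeg⟩ := hTC v hodeg
      have hsub : (M.dir.filter fun f => M.dreach w f.1) ⊆
          (M.dir.filter fun f => M.dreach v f.1) := by
        intro f hf
        obtain ⟨hf1, hf2⟩ := Finset.mem_filter.mp hf
        exact Finset.mem_filter.mpr ⟨hf1, Relation.ReflTransGen.head hw hf2⟩
      have hmem : (v, w) ∈ M.dir.filter fun f => M.dreach v f.1 :=
        Finset.mem_filter.mpr ⟨hw, Relation.ReflTransGen.refl⟩
      have hnotmem : (v, w) ∉ M.dir.filter fun f => M.dreach w f.1 := by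
        intro hcon
        exact hnc ⟨(v, w), hw, (Finset.mem_filter.mp hcon).2⟩
      have hlt := Finset.card_lt_card
        ((Finset.ssubset_iff_of_subset hsub).mpr ⟨(v, w), hmem, hnotmem⟩)
      obtain ⟨x, hx1, hx2⟩ := ih _ (lt_of_lt_of_le hlt hcard) w le_rfl
      exact ⟨x, hx1, Relation.ReflTransGen.head ⟨hw, hwdeg⟩ hx2⟩

lemma treeReach_transfer (hP : N.Proper) (hp₁ : RootedPartner M₁ N)
    (hp₂ : RootedPartner M₂ N) :
    ∀ {w x : V}, treeReach M₁ w x → ¬ InRootComp N w → treeReach M₂ w x := by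
  intro w x h
  induction h using Relation.ReflTransGen.head_induction_on with
  | refl => intro _; exact .refl
  | @head p q hstep hrest ih =>
    intro hp'
    have hq : ¬ InRootComp N q := by
      intro hq'
      have hu := into_rootcomp hP hp₁ hstep.1 hq'
      exact hp' (inRootComp_of_sim
        (sim_of_ureach (Relation.ReflTransGen.single (ustep_symm hu))) hq')
    refine Relation.ReflTransGen.head ⟨edge_transfer hP hp₁ hp₂ hstep.1 hq, ?_⟩ (ih hq)
    rw [← ideg_transfer hP hp₁ hp₂ hq]
    exact hstep.2

lemma split_tree (hP : N.Proper) (hpart : RootedPartner M N) {x : V} :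
    ∀ {v : V}, treeReach M v x → InRootComp N v →
      N.ureach v x ∨ ∃ t w, N.ureach v t ∧ (t, w) ∈ N.dir ∧ M.ideg w ≤ 1 ∧
        ¬ InRootComp N w ∧ treeReach M w x := by
  intro v h
  induction h using Relation.ReflTransGen.head_induction_on with
  | refl => intro _; exact Or.inl .refl
  | @head p q hstep hrest ih =>
    intro hp'
    by_cases hN : (p, q) ∈ N.dir
    · have hq : ¬ InRootComp N q := by
        intro hq'
        have h0 := rootcomp_ideg hP hpart hq'
        have : 0 < N.ideg q := ideg_pos_of_mem hN (show ((p, q)).2 = q from rfl)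
        omega
      exact Or.inr ⟨p, q, .refl, hN, hstep.2, hq, hrest⟩
    · have hu : N.ustep p q := (hpart.1.1.2.2.1 (p, q) hstep.1 hN).1
      have hq' : InRootComp N q := inRootComp_of_sim (sim_of_ureach (.single hu)) hp'
      rcases ih hq' with hl | ⟨t, w, hh1, hh2, hh3, hh4, hh5⟩
      · exact Or.inl (Relation.ReflTransGen.head hu hl)
      · exact Or.inr ⟨t, w, Relation.ReflTransGen.head hu hh1, hh2, hh3, hh4, hh5⟩

lemma leaf_transfer (hL : LNetwork N) (hp₁ : RootedPartner M₁ N) (hp₂ : RootedPartner M₂ N)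
    {x : V} (h : M₁.odeg x = 0) : M₂.odeg x = 0 :=
  hL.2 x ⟨M₁, hp₁, h⟩ M₂ hp₂

lemma key_leaf (hP : N.Proper) (hL : LNetwork N) {G' G₀ : SDG V} (hp' : RootedPartner G' N)
    (hp₀ : RootedPartner G₀ N) (hTC : TreeChildDAG G₀) {r : V}
    (hr : G'.ideg r = 0) (hrc : InRootComp N r) :
    ∃ x, G'.odeg x = 0 ∧ treeReach G' r x := by
  obtain ⟨r₀, hru, hr₀⟩ := exists_root hP hp₀ hrc
  have hr₀rc : InRootComp N r₀ := inRootComp_of_sim (sim_of_ureach hru) hrc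
  obtain ⟨x, hx0, hxt⟩ := descent hp₀ hTC r₀
  rcases split_tree hP hp₀ hxt hr₀rc with hl | ⟨t, w, hh1, hh2, hh3, hh4, hh5⟩
  · exact ⟨x, leaf_transfer hL hp₀ hp' hx0, tree_from_root hP hp' hr (hru.trans hl)⟩
  · refine ⟨x, leaf_transfer hL hp₀ hp' hx0, ?_⟩
    have htr1 : treeReach G' r t := tree_from_root hP hp' hr (hru.trans hh1)
    have hstep : treeReach G' t x := by
      refine Relation.ReflTransGen.head ⟨hp'.1.1.2.1 hh2, ?_⟩
        (treeReach_transfer hP hp₀ hp' hh5 hh4)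
      rw [ideg_transfer hP hp' hp₀ hh4]
      exact hh3
    exact htr1.trans hstep

lemma tree_path_unique_source {G' : SDG V} {r x : V}
    (hr : G'.ideg r = 0) (h : treeReach G' r x) :
    ∀ v, G'.dreach v x → G'.ideg v = 0 → v = r := by
  induction h with
  | refl =>
    intro v hv h0
    rcases Relation.ReflTransGen.cases_tail hv with rfl | ⟨w, _, hw⟩
    · rfl
    · exfalso
      have : 0 < G'.ideg r := ideg_pos_of_mem hw (show ((w, r)).2 = r from rfl)
      omega
  | @tail b c hrb hstep ih =>
    intro v hv h0
    rcases Relation.ReflTransGen.cases_tail hv with heq | ⟨w, hvw, hw⟩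
    · exfalso
      have hcpos : 0 < G'.ideg c := ideg_pos_of_mem hstep.1 (show ((b, c)).2 = c from rfl)
      rw [heq] at hcpos
      omega
    · have hwb : w = b := by
        have := Finset.card_le_one.mp hstep.2 (w, c)
          (Finset.mem_filter.mpr ⟨hw, rfl⟩) (b, c) (Finset.mem_filter.mpr ⟨hstep.1, rfl⟩)
        exact congrArg Prod.fst this
      exact ih v (hwb ▸ hvw) h0

lemma chain_nodup {G' : SDG V} (hnc : ¬ G'.HasDirCycle) :
    ∀ (l : List V) (a : V), List.Chain G'.dstep a l → (a :: l).Nodup := by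
  intro l
  induction l with
  | nil => intro a _; exact List.nodup_singleton a
  | cons c cs ih =>
    intro a hc
    obtain ⟨hh1, hh2⟩ := List.chain_cons.mp hc
    refine List.nodup_cons.mpr ⟨?_, ih c hh2⟩
    intro ha
    exact hnc ⟨(a, c), hh1, rtg_of_chain_mem cs c a hh2 ha⟩

lemma paths_finite {G' : SDG V} (hnc : ¬ G'.HasDirCycle) (u v : V) :
    {l : List V | IsDPathList G' u v l}.Finite := by
  classical
  set s : Finset V := insert u (G'.dir.image Prod.snd) with hs
  have hsub : {l : List V | IsDPathList G' u v l} ⊆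
      (fun l : List {a // a ∈ s} => l.map Subtype.val) '' {l | l.length ≤ s.card} := by
    intro l hl
    obtain ⟨hhead, hlast, hchain⟩ := hl
    cases l with
    | nil => simp at hhead
    | cons a rest =>
      have hau : a = u := by simpa using hhead
      subst hau
      have hch : List.Chain G'.dstep a rest := hchain
      have hmem : ∀ y ∈ a :: rest, y ∈ s := by
        intro y hy
        rcases List.mem_cons.mp hy with rfl | hy'
        · exact Finset.mem_insert_self _ _
        · obtain ⟨c, hc⟩ := chain_mem_edge rest a y hch hy'
          exact Finset.mem_insert_of_mem (Finset.mem_image.mpr ⟨(c, y), hc, rfl⟩)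
      have hnd := chain_nodup hnc rest a hch
      refine ⟨(a :: rest).pmap (fun z hz => (⟨z, hz⟩ : {w // w ∈ s})) hmem, ?_, ?_⟩
      · simp only [Set.mem_setOf_eq, List.length_pmap]
        have hh1 : (a :: rest).toFinset.card = (a :: rest).length :=
          List.toFinset_card_of_nodup hnd
        have hh2 : (a :: rest).toFinset ⊆ s := fun z hz => hmem z (List.mem_toFinset.mp hz)
        have := Finset.card_le_card hh2
        omega
      · simp [List.map_pmap]
  exact Set.Finite.subset (Set.Finite.image _ (List.finite_length_le _ _)) hsub

lemma pathCount_pos {G' : SDG V} (hnc : ¬ G'.HasDirCycle) {u v : V}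
    (h : G'.dreach u v) : 0 < pathCount G' u v := by
  rw [pathCount, Set.ncard_pos (paths_finite hnc u v)]
  obtain ⟨l, hl, hlast⟩ := List.exists_isChain_cons_of_relationReflTransGen h
  refine ⟨u :: l, rfl, ?_, hl⟩
  rw [List.getLast?_eq_getLast (List.cons_ne_nil _ _), hlast]

lemma pathCount_eq_zero {G' : SDG V} {u v : V} (h : ¬ G'.dreach u v) :
    pathCount G' u v = 0 := by
  have hempty : {l : List V | IsDPathList G' u v l} = ∅ := by
    rw [Set.eq_empty_iff_forall_notMem]
    rintro l ⟨hhead, hlast, hchain⟩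
    cases l with
    | nil => simp at hhead
    | cons a rest =>
      have hau : a = u := by simpa using hhead
      subst hau
      apply h
      have hh1 := rtg_of_chain rest a hchain
      have hh2 : (a :: rest).getLast (List.cons_ne_nil _ _) = v := by
        rw [List.getLast?_eq_getLast (List.cons_ne_nil _ _)] at hlast
        exact Option.some_injective _ hlast
      rwa [hh2] at hh1
  rw [pathCount, hempty, Set.ncard_empty]

lemma exists_rootchoice_partner (hP : N.Proper) {G₀ : SDG V} (hp₀ : RootedPartner G₀ N) :
    ∃ p : (V → V) × SDG V, RootChoice N p.1 ∧ PartnerFor N p.1 p.2 := by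
  classical
  set ρ : V → V := fun v => if hv : InRootComp N v then (exists_root hP hp₀ hv).choose else v
    with hρdef
  have hρspec : ∀ v (hv : InRootComp N v), N.ureach v (ρ v) ∧ G₀.ideg (ρ v) = 0 := by
    intro v hv
    rw [hρdef]
    simp only [dif_pos hv]
    exact (exists_root hP hp₀ hv).choose_spec
  have hsim : ∀ v (hv : InRootComp N v), sim N v (ρ v) :=
    fun v hv => sim_of_ureach (hρspec v hv).1
  have hrc : ∀ v (hv : InRootComp N v), InRootComp N (ρ v) :=
    fun v hv => inRootComp_of_sim (hsim v hv) hv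
  have huniq : ∀ u v, InRootComp N u → InRootComp N v → sim N u v → ρ u = ρ v := by
    intro u v hu hv huv
    apply root_unique hP hp₀ (hρspec u hu).2 (hρspec v hv).2
    have hsim1 : sim N (ρ u) (ρ v) :=
      ⟨((hsim u hu).2.trans huv.1).trans (hsim v hv).1,
       ((hsim v hv).2.trans huv.2).trans (hsim u hu).1⟩
    exact ureach_of_rootcomp_sreach hP hp₀ hsim1.1 (hrc u hu) hsim1.2
  refine ⟨⟨ρ, G₀⟩, ⟨fun v hv => ⟨hsim v hv, fun u hu huv => huniq u v hu hv huv⟩,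
    fun v hv => dif_neg hv⟩, hp₀, ?_⟩
  ext z
  simp only [Set.mem_setOf_eq, Set.mem_image]
  constructor
  · intro hz
    have hzrc := root_in_rootcomp hP hp₀ hz
    exact ⟨z, hzrc, root_unique hP hp₀ (hρspec z hzrc).2 hz (ureach_symm (hρspec z hzrc).1)⟩
  · rintro ⟨w, hw, rfl⟩
    exact (hρspec w hw).2

end Proof14D

theorem statement_14 {V : Type} [DecidableEq V] (N : SDG V) (hP : N.Proper)
    (hL : LNetwork N) (hW : WeaklyTreeChild N)
    (t₁ t₂ : V) (h1 : InRootComp N t₁) (h2 : InRootComp N t₂)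
    (hdistinct : ¬ sim N t₁ t₂) :
    muIncomp N (muR N t₁) (muR N t₂) := by
  obtain ⟨G₀, hp₀, hTC⟩ := hW
  have hex : ∃ p : (V → V) × SDG V, RootChoice N p.1 ∧ PartnerFor N p.1 p.2 :=
    exists_rootchoice_partner hP hp₀
  have hmu : ∀ t : V, muR N t = fun x => pathCount hex.choose.2 (hex.choose.1 t) x := by
    intro t
    rw [muR, dif_pos hex]
  obtain ⟨hρ, hpf⟩ := hex.choose_spec
  set ρ := hex.choose.1 with hρdef
  set G' := hex.choose.2 with hG'def
  have hp' : RootedPartner G' N := hpf.1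
  have hnc' := partner_noCycle hp'
  have hroot : ∀ t, InRootComp N t → G'.ideg (ρ t) = 0 ∧ InRootComp N (ρ t) := by
    intro t ht
    constructor
    · have hmem : ρ t ∈ {v | G'.ideg v = 0} := by
        rw [hpf.2]
        exact ⟨t, ht, rfl⟩
      exact hmem
    · exact inRootComp_of_sim ((hρ.1 t ht).1) ht
  have hne : ρ t₁ ≠ ρ t₂ := by
    intro he
    apply hdistinct
    have s1 := (hρ.1 t₁ h1).1
    have s2 := (hρ.1 t₂ h2).1
    rw [he] at s1
    exact ⟨s1.1.trans s2.2, s2.1.trans s1.2⟩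
  obtain ⟨x₁, hx₁leaf, hx₁tree⟩ := key_leaf hP hL hp' hp₀ hTC (hroot t₁ h1).1 (hroot t₁ h1).2
  obtain ⟨x₂, hx₂leaf, hx₂tree⟩ := key_leaf hP hL hp' hp₀ hTC (hroot t₂ h2).1 (hroot t₂ h2).2
  constructor
  · intro hle
    have hh := hle x₁ ⟨G', hp', hx₁leaf⟩
    rw [hmu t₁, hmu t₂] at hh
    simp only at hh
    have hpos : 0 < pathCount G' (ρ t₁) x₁ :=
      pathCount_pos hnc' (Relation.ReflTransGen.mono (fun a b h => h.1) _ _ hx₁tree)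
    have hzero : pathCount G' (ρ t₂) x₁ = 0 := by
      apply pathCount_eq_zero
      intro hdr
      exact hne (tree_path_unique_source (hroot t₁ h1).1 hx₁tree (ρ t₂) hdr (hroot t₂ h2).1).symm
    omega
  · intro hle
    have hh := hle x₂ ⟨G', hp', hx₂leaf⟩
    rw [hmu t₁, hmu t₂] at hh
    simp only at hh
    have hpos : 0 < pathCount G' (ρ t₂) x₂ :=
      pathCount_pos hnc' (Relation.ReflTransGen.mono (fun a b h => h.1) _ _ hx₂tree)
    have hzero : pathCount G' (ρ t₁) x₂ = 0 := by
      apply pathCount_eq_zero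
      intro hdr
      exact hne (tree_path_unique_source (hroot t₂ h2).1 hx₂tree (ρ t₁) hdr (hroot t₁ h1).1)
    omega


end SDG
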